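/- Let (x(·), u(·), ψ₀, ψ(·)) be a Pontryagin extremal of the problem of minimizing ∫_a^b (u₁² + u₂²) dt subject to ẋ₁ = x₃, ẋ₂ = x₄, ẋ₃ = −x₁(x₁²+x₂²) + u₁, ẋ₄ = −x₂(x₁²+x₂²) + u₂ (Ω = ℝ²). Then the angular-momentum-type quantity F(t) = −ψ₁(t)x₂(t) + ψ₂(t)x₁(t) − ψ₃(t)x₄(t) + ψ₄(t)x₃(t) is constant on [a,b]. -/

import Mathlib

open Set MeasureTheory

/-- `f` is absolutely continuous on `[a,b]`. -/
def AbsContOn (a b : ℝ) (f : ℝ → ℝ) : Prop :=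
  ∀ ε > 0, ∃ δ > 0, ∀ (n : ℕ) (c d : Fin n → ℝ),
    (∀ j, a ≤ c j ∧ c j ≤ d j ∧ d j ≤ b) →
    (Pairwise fun i j => Disjoint (Set.Ioo (c i) (d i)) (Set.Ioo (c j) (d j))) →
    (∑ j, (d j - c j)) ≤ δ → (∑ j, |f (d j) - f (c j)|) ≤ ε

/-- Hamiltonian of the 4-state, 2-control problem
`∫ (u₁² + u₂²) dt → min`, `ẋ₁ = x₃`, `ẋ₂ = x₄`,
`ẋ₃ = -x₁(x₁²+x₂²) + u₁`, `ẋ₄ = -x₂(x₁²+x₂²) + u₂`, `Ω = ℝ²`. -/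
noncomputable def H7 (x1 x2 x3 x4 u1 u2 p0 p1 p2 p3 p4 : ℝ) : ℝ :=
  p0 * (u1 ^ 2 + u2 ^ 2) + p1 * x3 + p2 * x4
    + p3 * (-x1 * (x1 ^ 2 + x2 ^ 2) + u1) + p4 * (-x2 * (x1 ^ 2 + x2 ^ 2) + u2)

/-- Pontryagin extremal of the above problem on `[a,b]`: the Hamiltonian system
(with the partial derivatives of `H7` computed explicitly) and the maximality
condition over `Ω = ℝ²` hold a.e. -/
def IsExtremal8 (a b : ℝ) (x1 x2 x3 x4 u1 u2 : ℝ → ℝ) (p0 : ℝ)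
    (p1 p2 p3 p4 : ℝ → ℝ) : Prop :=
  AbsContOn a b x1 ∧ AbsContOn a b x2 ∧ AbsContOn a b x3 ∧ AbsContOn a b x4 ∧
  AbsContOn a b p1 ∧ AbsContOn a b p2 ∧ AbsContOn a b p3 ∧ AbsContOn a b p4 ∧
  Measurable u1 ∧ Measurable u2 ∧ (∃ M, ∀ t, |u1 t| ≤ M ∧ |u2 t| ≤ M) ∧
  p0 ≤ 0 ∧
  ¬(p0 = 0 ∧ ∀ t ∈ Set.Icc a b, p1 t = 0 ∧ p2 t = 0 ∧ p3 t = 0 ∧ p4 t = 0) ∧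
  (∀ᵐ t : ℝ, t ∈ Set.Icc a b →
    HasDerivAt x1 (x3 t) t ∧ HasDerivAt x2 (x4 t) t ∧
    HasDerivAt x3 (-(x1 t) * ((x1 t) ^ 2 + (x2 t) ^ 2) + u1 t) t ∧
    HasDerivAt x4 (-(x2 t) * ((x1 t) ^ 2 + (x2 t) ^ 2) + u2 t) t ∧
    HasDerivAt p1 (p3 t * (3 * (x1 t) ^ 2 + (x2 t) ^ 2)
      + 2 * p4 t * (x1 t) * (x2 t)) t ∧
    HasDerivAt p2 (2 * p3 t * (x1 t) * (x2 t)
      + p4 t * ((x1 t) ^ 2 + 3 * (x2 t) ^ 2)) t ∧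
    HasDerivAt p3 (-(p1 t)) t ∧ HasDerivAt p4 (-(p2 t)) t ∧
    ∀ v1 v2 : ℝ, H7 (x1 t) (x2 t) (x3 t) (x4 t) v1 v2 p0 (p1 t) (p2 t) (p3 t) (p4 t)
      ≤ H7 (x1 t) (x2 t) (x3 t) (x4 t) (u1 t) (u2 t) p0 (p1 t) (p2 t) (p3 t) (p4 t))

/-!
`F = -ψ₁ x₂ + ψ₂ x₁ - ψ₃ x₄ + ψ₄ x₃` is the Noether integral of the rotation symmetry
`(x₁, x₂) ↦ R (x₁, x₂)`, `(x₃, x₄) ↦ R (x₃, x₄)` of the problem. Along an extremal it is absolutely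
continuous, and wherever the canonical equations hold its derivative is
`u₁ ψ₄ - u₂ ψ₃`, which vanishes because the maximality condition over `Ω = ℝ²` forces
`ψ₃ = -2ψ₀u₁` and `ψ₄ = -2ψ₀u₂`. An absolutely continuous function with a.e. vanishing derivative
is constant.
-/

theorem AbsContOn.absolutelyContinuousOnInterval {a b : ℝ} {f : ℝ → ℝ} (hab : a ≤ b)
    (hf : AbsContOn a b f) : AbsolutelyContinuousOnInterval f a b := by
  rw [absolutelyContinuousOnInterval_iff]
  intro ε hε
  obtain ⟨δ, hδ, hδf⟩ := hf (ε / 2) (half_pos hε)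
  refine ⟨δ, hδ, fun ⟨n, I⟩ ⟨hmem, hdisj⟩ hlen => ?_⟩
  simp only [uIcc_of_le hab, Finset.mem_range] at hmem hdisj hlen ⊢
  have hdist : ∀ x y, dist (f x) (f y) = |f (max x y) - f (min x y)| := by
    intro x y
    rcases le_total x y with h | h <;> simp [h, Real.dist_eq, abs_sub_comm]
  have hsum := hδf n (fun j => min (I j).1 (I j).2) (fun j => max (I j).1 (I j).2)
    (fun j => ⟨le_min (hmem j j.2).1.1 (hmem j j.2).2.1, min_le_max,
      max_le (hmem j j.2).1.2 (hmem j j.2).2.2⟩)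
    (fun i j hij => (hdisj (by simp) (by simp) (Fin.val_injective.ne hij)).mono
      Ioo_subset_Ioc_self Ioo_subset_Ioc_self)
    (by simpa [Finset.sum_range, max_sub_min_eq_abs', Real.dist_eq] using hlen.le)
  rw [Finset.sum_range]
  simp only [hdist]
  linarith

theorem two_mul_mul_add_eq_zero_of_forall_le {p q u : ℝ}
    (h : ∀ v, p * v ^ 2 + q * v ≤ p * u ^ 2 + q * u) : 2 * p * u + q = 0 := by
  have hmax : IsLocalMax (fun v => p * v ^ 2 + q * v) u := Filter.Eventually.of_forall h
  refine hmax.hasDerivAt_eq_zero ?_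
  refine (((hasDerivAt_pow 2 u).const_mul p).fun_add ((hasDerivAt_id' u).const_mul q)).congr_deriv ?_
  push_cast
  ring

theorem H7_stationary_of_forall_le {X1 X2 X3 X4 U1 U2 p0 P1 P2 P3 P4 : ℝ}
    (hmax : ∀ v1 v2, H7 X1 X2 X3 X4 v1 v2 p0 P1 P2 P3 P4 ≤ H7 X1 X2 X3 X4 U1 U2 p0 P1 P2 P3 P4) :
    2 * p0 * U1 + P3 = 0 ∧ 2 * p0 * U2 + P4 = 0 := by
  constructor <;> refine two_mul_mul_add_eq_zero_of_forall_le fun v => ?_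
  · have := hmax v U2
    simp only [H7] at this
    linarith
  · have := hmax U1 v
    simp only [H7] at this
    linarith

theorem hasDerivAt_angularMomentum_eq_zero {x1 x2 x3 x4 p1 p2 p3 p4 : ℝ → ℝ} {u1 u2 p0 t : ℝ}
    (hx1 : HasDerivAt x1 (x3 t) t) (hx2 : HasDerivAt x2 (x4 t) t)
    (hx3 : HasDerivAt x3 (-(x1 t) * ((x1 t) ^ 2 + (x2 t) ^ 2) + u1) t)
    (hx4 : HasDerivAt x4 (-(x2 t) * ((x1 t) ^ 2 + (x2 t) ^ 2) + u2) t)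
    (hp1 : HasDerivAt p1 (p3 t * (3 * (x1 t) ^ 2 + (x2 t) ^ 2) + 2 * p4 t * (x1 t) * (x2 t)) t)
    (hp2 : HasDerivAt p2 (2 * p3 t * (x1 t) * (x2 t) + p4 t * ((x1 t) ^ 2 + 3 * (x2 t) ^ 2)) t)
    (hp3 : HasDerivAt p3 (-(p1 t)) t) (hp4 : HasDerivAt p4 (-(p2 t)) t)
    (hu1 : 2 * p0 * u1 + p3 t = 0) (hu2 : 2 * p0 * u2 + p4 t = 0) :
    HasDerivAt (fun s => -p1 s * x2 s + p2 s * x1 s - p3 s * x4 s + p4 s * x3 s) 0 t := by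
  refine ((((hp1.fun_neg.fun_mul hx2).fun_add (hp2.fun_mul hx1)).fun_sub
    (hp3.fun_mul hx4)).fun_add (hp4.fun_mul hx3)).congr_deriv ?_
  linear_combination u1 * hu2 - u2 * hu1

theorem stmt_9 (a b : ℝ) (hab : a < b) (x1 x2 x3 x4 u1 u2 : ℝ → ℝ) (p0 : ℝ)
    (p1 p2 p3 p4 : ℝ → ℝ)
    (hext : IsExtremal8 a b x1 x2 x3 x4 u1 u2 p0 p1 p2 p3 p4) :
    ∀ t1 ∈ Set.Icc a b, ∀ t2 ∈ Set.Icc a b,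
      -p1 t1 * x2 t1 + p2 t1 * x1 t1 - p3 t1 * x4 t1 + p4 t1 * x3 t1 =
      -p1 t2 * x2 t2 + p2 t2 * x1 t2 - p3 t2 * x4 t2 + p4 t2 * x3 t2 := by
  obtain ⟨hx1, hx2, hx3, hx4, hp1, hp2, hp3, hp4, -, -, -, -, -, hsys⟩ := hext
  have ac {f : ℝ → ℝ} (hf : AbsContOn a b f) := hf.absolutelyContinuousOnInterval hab.le
  have hF_ac := ((((ac hp1).fun_neg.fun_mul (ac hx2)).fun_add ((ac hp2).fun_mul (ac hx1))).fun_sub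
    ((ac hp3).fun_mul (ac hx4))).fun_add ((ac hp4).fun_mul (ac hx3))
  have hF_deriv : ∀ᵐ t, t ∈ uIcc a b → HasDerivAt
      (fun s => -p1 s * x2 s + p2 s * x1 s - p3 s * x4 s + p4 s * x3 s) 0 t := by
    rw [uIcc_of_le hab.le]
    filter_upwards [hsys] with t ht hmem
    obtain ⟨h1, h2, h3, h4, h5, h6, h7, h8, hmax⟩ := ht hmem
    obtain ⟨hu1, hu2⟩ := H7_stationary_of_forall_le hmax
    exact hasDerivAt_angularMomentum_eq_zero h1 h2 h3 h4 h5 h6 h7 h8 hu1 hu2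
  obtain ⟨C, hC⟩ := hF_ac.const_of_ae_hasDerivAt_zero hF_deriv
  rw [uIcc_of_le hab.le] at hC
  intro t1 ht1 t2 ht2
  exact (hC t1 ht1).trans (hC t2 ht2).symm
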